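/- Let r ≥ 2 be an integer, R > 0, let d be the homogeneous quasi-distance on 𝔽_{r2} with d(p,q) := inf{λ > 0 : ‖δ_{1/λ}(p⁻¹·q)‖ ≤ R}, and let a = 0.9. There exists δ > 0 such that for all p, q ∈ 𝔽_{r2} with v_p, v_q, w_p, w_q nonzero satisfying R·‖w_p‖ ≤ a·‖v_p‖², R·‖w_q‖ ≤ a·‖v_q‖², ∠(v_p,v_q) < δ and ∠(w_p,w_q) < δ, one has d(p,q) ≤ d(0,p) or d(p,q) ≤ d(0,q). -/

import Mathlib

/-!
Write `a = ‖v_p‖`, `b = ‖w_p‖`, `c = ‖v_q‖`, `e = ‖w_q‖`. The distance `λ = d(0, p)` is the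
positive root of `R²λ⁴ = a²λ² + b²`, and `d(p, q) ≤ λ` as soon as
`‖v_q - v_p‖²λ² + ‖w_q - w_p - ½ v_p ∧ v_q‖² ≤ R²λ⁴`. Since `d` is symmetric we may assume
`d(0, q) ≤ d(0, p)`. Outside the parabolic region the horizontal layer dominates, `a ≥ 0.8 R λ`,
which leaves the margin `c²λ² + e² + 0.16 c R λ³ ≤ 2 a c λ²`. For angles below `δ`, with `δ` and
`R δ` at most `1/100`, the angle defect of the horizontal term and the wedge term
`‖½ v_p ∧ v_q‖ ≤ a c δ` cost less than this margin, and the vertical cross term can be dropped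
because `⟨w_p, w_q⟩ ≥ 0`.
-/

namespace Fr2

/-- Index set for the second-layer coordinates: pairs `i < j`. -/
abbrev UT (r : ℕ) := {ij : Fin r × Fin r // ij.1 < ij.2}

/-- Carrier of `𝔽_{r2}`: `p = (v_p, w_p)` with `v_p ∈ ℝ^r` and `w_p ∈ ℝ^{r(r-1)/2}`. -/
abbrev G (r : ℕ) := (Fin r → ℝ) × (UT r → ℝ)

/-- Group law of `𝔽_{r2}`. -/
noncomputable def mul {r : ℕ} (p q : G r) : G r :=
  (fun i => p.1 i + q.1 i,
   fun ij => p.2 ij + q.2 ij +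
     (p.1 ij.1.1 * q.1 ij.1.2 - q.1 ij.1.1 * p.1 ij.1.2) / 2)

/-- Group inverse of `𝔽_{r2}`. -/
noncomputable def inv {r : ℕ} (p : G r) : G r := (fun i => -p.1 i, fun ij => -p.2 ij)

/-- Dilation of factor `l`. -/
noncomputable def dil {r : ℕ} (l : ℝ) (p : G r) : G r := (fun i => l * p.1 i, fun ij => l ^ 2 * p.2 ij)

/-- Square of the Euclidean norm. -/
noncomputable def normSq {r : ℕ} (p : G r) : ℝ := (∑ i, (p.1 i) ^ 2) + ∑ ij, (p.2 ij) ^ 2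

/-- The homogeneous quasi-distance whose unit ball centered at the identity is the
Euclidean ball of radius `R`. -/
noncomputable def dist (R : ℝ) {r : ℕ} (p q : G r) : ℝ :=
  sInf {l : ℝ | 0 < l ∧ normSq (dil (1 / l) (mul (inv p) q)) ≤ R ^ 2}

end Fr2

/-- Euclidean scalar product on `ι → ℝ`. -/
def innerF {ι : Type*} [Fintype ι] (u v : ι → ℝ) : ℝ := ∑ i, u i * v i

/-- Euclidean norm on `ι → ℝ`. -/
noncomputable def normF {ι : Type*} [Fintype ι] (u : ι → ℝ) : ℝ :=
  Real.sqrt (innerF u u)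

/-- The (non-oriented) Euclidean angle between two vectors, in `[0, π]`, characterized by
`cos ∠(u,v) = ⟨u,v⟩ / (‖u‖·‖v‖)`. -/
noncomputable def angleF {ι : Type*} [Fintype ι] (u v : ι → ℝ) : ℝ :=
  Real.arccos (innerF u v / (normF u * normF v))

open Real InnerProductGeometry RealInnerProductSpace

section InnerProductGeometry
variable {V : Type*} [NormedAddCommGroup V] [InnerProductSpace ℝ V]

lemma norm_sub_sq_le_of_angle_lt {x y : V} {δ : ℝ} (h : angle x y < δ) :
    ‖y - x‖ ^ 2 ≤ ‖x‖ ^ 2 + ‖y‖ ^ 2 - 2 * (‖x‖ * ‖y‖) * (1 - δ ^ 2 / 2) := by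
  have hcos : 1 - δ ^ 2 / 2 ≤ cos (angle x y) := by
    have := one_sub_sq_div_two_le_cos (x := angle x y)
    nlinarith [angle_nonneg x y]
  rw [norm_sub_sq_real, real_inner_comm, ← cos_angle_mul_norm_mul_norm]
  nlinarith [mul_nonneg (norm_nonneg x) (norm_nonneg y)]

lemma norm_sub_sq_le_of_angle_le_pi_div_two {x y : V} (h : angle x y ≤ π / 2) :
    ‖y - x‖ ^ 2 ≤ ‖x‖ ^ 2 + ‖y‖ ^ 2 := by
  have hcos : 0 ≤ cos (angle x y) :=
    cos_nonneg_of_neg_pi_div_two_le_of_le (by linarith [angle_nonneg x y, pi_pos]) h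
  rw [norm_sub_sq_real, real_inner_comm, ← cos_angle_mul_norm_mul_norm]
  nlinarith [mul_nonneg hcos (mul_nonneg (norm_nonneg x) (norm_nonneg y))]

lemma sin_angle_mul_norm_mul_norm_sq (x y : V) :
    (sin (angle x y) * (‖x‖ * ‖y‖)) ^ 2 = ‖x‖ ^ 2 * ‖y‖ ^ 2 - ⟪x, y⟫ ^ 2 := by
  rw [← cos_angle_mul_norm_mul_norm]
  linear_combination (‖x‖ * ‖y‖) ^ 2 * sin_sq_add_cos_sq (angle x y)

end InnerProductGeometry

section Euclidean
variable {ι : Type*} [Fintype ι]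

lemma innerF_eq_inner (u v : ι → ℝ) :
    innerF u v = ⟪(WithLp.toLp 2 u : EuclideanSpace ℝ ι), WithLp.toLp 2 v⟫ := by
  simp [innerF, PiLp.inner_apply, mul_comm]

lemma normF_eq_norm (u : ι → ℝ) : normF u = ‖(WithLp.toLp 2 u : EuclideanSpace ℝ ι)‖ := by
  rw [normF, innerF_eq_inner, real_inner_self_eq_norm_sq, sqrt_sq (norm_nonneg _)]

lemma angleF_eq_angle (u v : ι → ℝ) :
    angleF u v = angle (WithLp.toLp 2 u : EuclideanSpace ℝ ι) (WithLp.toLp 2 v) := by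
  rw [angleF, angle, innerF_eq_inner, normF_eq_norm, normF_eq_norm]

lemma normF_nonneg (u : ι → ℝ) : 0 ≤ normF u := sqrt_nonneg _

lemma angleF_nonneg (u v : ι → ℝ) : 0 ≤ angleF u v := arccos_nonneg _

lemma normF_pos {u : ι → ℝ} (hu : u ≠ 0) : 0 < normF u := by
  rw [normF_eq_norm, norm_pos_iff]; simpa using hu

lemma normF_sq (u : ι → ℝ) : normF u ^ 2 = ∑ i, u i ^ 2 := by
  simp [normF_eq_norm, EuclideanSpace.norm_sq_eq]

lemma angleF_comm (u v : ι → ℝ) : angleF u v = angleF v u := by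
  rw [angleF_eq_angle, angleF_eq_angle, angle_comm]

lemma normF_sub_le (u v : ι → ℝ) : normF (u - v) ≤ normF u + normF v := by
  simpa [normF_eq_norm] using norm_sub_le (WithLp.toLp 2 u : EuclideanSpace ℝ ι) (WithLp.toLp 2 v)

lemma normF_sub_sq_le_of_angleF_lt {u v : ι → ℝ} {δ : ℝ} (h : angleF u v < δ) :
    normF (v - u) ^ 2 ≤ normF u ^ 2 + normF v ^ 2 - 2 * (normF u * normF v) * (1 - δ ^ 2 / 2) := by
  rw [angleF_eq_angle] at h
  simpa [normF_eq_norm] using norm_sub_sq_le_of_angle_lt h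

lemma normF_sub_sq_le_of_angleF_le_pi_div_two {u v : ι → ℝ} (h : angleF u v ≤ π / 2) :
    normF (v - u) ^ 2 ≤ normF u ^ 2 + normF v ^ 2 := by
  rw [angleF_eq_angle] at h
  simpa [normF_eq_norm] using norm_sub_sq_le_of_angle_le_pi_div_two h

lemma sin_angleF_mul_normF_mul_normF_sq (u v : ι → ℝ) :
    (sin (angleF u v) * (normF u * normF v)) ^ 2 = normF u ^ 2 * normF v ^ 2 - innerF u v ^ 2 := by
  rw [angleF_eq_angle, normF_eq_norm, normF_eq_norm, innerF_eq_inner]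
  exact sin_angle_mul_norm_mul_norm_sq _ _

lemma sum_sum_mul_sub_mul_sq (u v : ι → ℝ) :
    ∑ i, ∑ j, (u i * v j - v i * u j) ^ 2
      = 2 * ((∑ i, u i ^ 2) * ∑ i, v i ^ 2) - 2 * (∑ i, u i * v i) ^ 2 := by
  have h (i j : ι) : (u i * v j - v i * u j) ^ 2
      = u i ^ 2 * v j ^ 2 + v i ^ 2 * u j ^ 2 - 2 * (u i * v i) * (u j * v j) := by ring
  simp only [h, Finset.sum_add_distrib, Finset.sum_sub_distrib, ← Finset.mul_sum, ← Finset.sum_mul]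
  ring

end Euclidean

/-- The positive root `λ` of `R² λ⁴ = V² λ² + W²`. -/
noncomputable def quarticRoot (R V W : ℝ) : ℝ :=
  √((V ^ 2 + √(V ^ 4 + 4 * R ^ 2 * W ^ 2)) / (2 * R ^ 2))

section quarticRoot
variable {R V W : ℝ}

lemma quarticRoot_pos (hR : 0 < R) (hV : 0 < V) : 0 < quarticRoot R V W := by
  have := sqrt_nonneg (V ^ 4 + 4 * R ^ 2 * W ^ 2)
  exact sqrt_pos.2 (by positivity)

lemma quarticRoot_spec (hR : 0 < R) :
    R ^ 2 * quarticRoot R V W ^ 4 = V ^ 2 * quarticRoot R V W ^ 2 + W ^ 2 := by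
  have h2 : quarticRoot R V W ^ 2 = (V ^ 2 + √(V ^ 4 + 4 * R ^ 2 * W ^ 2)) / (2 * R ^ 2) := by
    have := sqrt_nonneg (V ^ 4 + 4 * R ^ 2 * W ^ 2)
    exact sq_sqrt (by positivity)
  have hs := sq_sqrt (by positivity : 0 ≤ V ^ 4 + 4 * R ^ 2 * W ^ 2)
  set s := √(V ^ 4 + 4 * R ^ 2 * W ^ 2)
  rw [show quarticRoot R V W ^ 4 = (quarticRoot R V W ^ 2) ^ 2 by ring, h2]
  field_simp
  linear_combination hs

lemma sq_mul_sq_add_sq_le_iff (hR : 0 < R) {l : ℝ} (hl : 0 < l) :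
    V ^ 2 * l ^ 2 + W ^ 2 ≤ R ^ 2 * l ^ 4 ↔ quarticRoot R V W ≤ l := by
  set s := √(V ^ 4 + 4 * R ^ 2 * W ^ 2)
  have hs0 : 0 ≤ s := sqrt_nonneg _
  have hs : s ^ 2 = V ^ 4 + 4 * R ^ 2 * W ^ 2 := sq_sqrt (by positivity)
  rw [quarticRoot, sqrt_le_left hl.le, div_le_iff₀ (by positivity)]
  constructor
  · intro h
    have h1 : V ^ 2 ≤ R ^ 2 * l ^ 2 := by nlinarith [sq_nonneg W, mul_pos hl hl]
    have h2 : s ^ 2 ≤ (2 * R ^ 2 * l ^ 2 - V ^ 2) ^ 2 := by nlinarith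
    nlinarith
  · intro h
    have h2 : s ^ 2 ≤ (2 * R ^ 2 * l ^ 2 - V ^ 2) ^ 2 := by nlinarith
    nlinarith [mul_pos hR hR]

end quarticRoot

section quarticEstimates
variable {R l a b c e : ℝ}

lemma le_mul_of_quartic_le (hR : 0 < R) (hl : 0 < l)
    (h : a ^ 2 * l ^ 2 + b ^ 2 ≤ R ^ 2 * l ^ 4) : a ≤ R * l := by
  refine abs_le_of_sq_le_sq' ?_ (by positivity) |>.2
  nlinarith [sq_nonneg b, mul_pos hl hl]

lemma le_mul_sq_of_quartic_le (hR : 0 < R)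
    (h : a ^ 2 * l ^ 2 + b ^ 2 ≤ R ^ 2 * l ^ 4) : b ≤ R * l ^ 2 := by
  refine abs_le_of_sq_le_sq' ?_ (by positivity) |>.2
  nlinarith [sq_nonneg (a * l)]

lemma mul_le_of_quartic_eq_of_parabolic (hR : 0 < R) (ha : 0 ≤ a) (hb : 0 ≤ b)
    (hp : R ^ 2 * l ^ 4 = a ^ 2 * l ^ 2 + b ^ 2) (hpb : R * b ≤ 0.9 * a ^ 2) :
    0.8 * (R * l) ≤ a := by
  have hRb : R ^ 2 * b ^ 2 ≤ 0.81 * a ^ 4 := by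
    nlinarith [mul_le_mul hpb hpb (by positivity) (by positivity)]
  have ha65 : 0.65 * (R ^ 2 * l ^ 2) ≤ a ^ 2 := by
    nlinarith [sq_nonneg (a ^ 2 - 0.654 * (R ^ 2 * l ^ 2))]
  nlinarith [sq_nonneg (R * l)]

lemma quartic_margin_of_parabolic (hR : 0 < R) (hl : 0 < l) (ha : 0 ≤ a) (hb : 0 ≤ b)
    (hc : 0 ≤ c) (he : 0 ≤ e) (hp : R ^ 2 * l ^ 4 = a ^ 2 * l ^ 2 + b ^ 2)
    (hpb : R * b ≤ 0.9 * a ^ 2) (hq : c ^ 2 * l ^ 2 + e ^ 2 ≤ R ^ 2 * l ^ 4)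
    (hqb : R * e ≤ 0.9 * c ^ 2) :
    c ^ 2 * l ^ 2 + e ^ 2 + 0.16 * (c * R * l ^ 3) ≤ 2 * a * c * l ^ 2 := by
  have ha8 := mul_le_of_quartic_eq_of_parabolic hR ha hb hp hpb
  have hac : 0.8 * (R * l) * (c * l ^ 2) ≤ a * (c * l ^ 2) :=
    mul_le_mul_of_nonneg_right ha8 (by positivity)
  suffices c ^ 2 * l ^ 2 + e ^ 2 ≤ 1.44 * (c * R * l ^ 3) by linarith
  rcases le_total c (0.8 * (R * l)) with hc8 | hc8
  · have he72 : e ≤ 0.72 * c * l := by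
      refine le_of_mul_le_mul_left ?_ hR
      nlinarith [mul_le_mul_of_nonneg_left hc8 hc]
    have hcc : c * (c * l ^ 2) ≤ 0.8 * (R * l) * (c * l ^ 2) :=
      mul_le_mul_of_nonneg_right hc8 (by positivity)
    nlinarith [mul_le_mul he72 he72 he (by positivity)]
  · have : R * l * (R * l ^ 3) ≤ 1.25 * c * (R * l ^ 3) :=
      mul_le_mul_of_nonneg_right (by linarith) (by positivity)
    nlinarith

lemma quartic_error_le {δ N : ℝ} (hR : 0 < R) (hl : 0 < l) (hc : 0 ≤ c)
    (haRl : a ≤ R * l) (hcRl : c ≤ R * l) (hb : b ≤ R * l ^ 2) (he : e ≤ R * l ^ 2)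
    (hN0 : 0 ≤ N) (hN : N ≤ a * c * δ) (hδ0 : 0 ≤ δ) (hδ : δ ≤ 1 / 100)
    (hRδ : R * δ ≤ 1 / 100) :
    a * c * δ ^ 2 * l ^ 2 + 2 * (b + e) * N + N ^ 2 ≤ 0.16 * (c * R * l ^ 3) := by
  have hcRl3 : 0 ≤ c * R * l ^ 3 := by positivity
  have hM : N ≤ c * R * l * δ := hN.trans (by nlinarith [mul_nonneg hc hδ0])
  have h1 : a * c * δ ^ 2 * l ^ 2 ≤ 0.0001 * (c * R * l ^ 3) := by
    have : a * (c * δ ^ 2 * l ^ 2) ≤ R * l * (c * δ ^ 2 * l ^ 2) :=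
      mul_le_mul_of_nonneg_right haRl (by positivity)
    nlinarith [mul_le_mul hδ hδ hδ0 (by norm_num : (0 : ℝ) ≤ 1 / 100)]
  have h2 : 2 * (b + e) * N ≤ 0.04 * (c * R * l ^ 3) := by
    have : (b + e) * N ≤ (2 * (R * l ^ 2)) * (c * R * l * δ) :=
      mul_le_mul (by linarith) hM hN0 (by positivity)
    nlinarith [mul_le_mul_of_nonneg_left hRδ hcRl3]
  have h3 : N ^ 2 ≤ 0.0001 * (c * R * l ^ 3) := by
    have hN2 : N ^ 2 ≤ (c * R * l * δ) ^ 2 := pow_le_pow_left₀ hN0 hM 2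
    have : c * (R * δ) ^ 2 ≤ R * l * (1 / 100) ^ 2 :=
      mul_le_mul hcRl (pow_le_pow_left₀ (by positivity) hRδ 2) (by positivity) (by positivity)
    nlinarith [mul_le_mul_of_nonneg_left this (by positivity : (0 : ℝ) ≤ c * l ^ 2)]
  linarith

end quarticEstimates

namespace Fr2
variable {r : ℕ}

noncomputable def halfWedge (u v : Fin r → ℝ) : UT r → ℝ :=
  fun ij => (u ij.1.1 * v ij.1.2 - v ij.1.1 * u ij.1.2) / 2

lemma normF_halfWedge_sq_le (u v : Fin r → ℝ) :
    normF (halfWedge u v) ^ 2 ≤ (normF u ^ 2 * normF v ^ 2 - innerF u v ^ 2) / 2 := by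
  have hsub : ∑ ij : UT r, halfWedge u v ij ^ 2
      ≤ ∑ ij : Fin r × Fin r, ((u ij.1 * v ij.2 - v ij.1 * u ij.2) / 2) ^ 2 := by
    unfold halfWedge
    rw [← Finset.sum_subtype (p := fun ij : Fin r × Fin r => ij.1 < ij.2)
      (Finset.univ.filter fun ij : Fin r × Fin r => ij.1 < ij.2) (by simp)
      (fun ij : Fin r × Fin r => ((u ij.1 * v ij.2 - v ij.1 * u ij.2) / 2) ^ 2)]
    exact Finset.sum_le_sum_of_subset_of_nonneg (Finset.filter_subset _ _)
      (fun _ _ _ => sq_nonneg _)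
  have hfull : ∑ ij : Fin r × Fin r, ((u ij.1 * v ij.2 - v ij.1 * u ij.2) / 2) ^ 2
      = (∑ i, ∑ j, (u i * v j - v i * u j) ^ 2) / 4 := by
    rw [Fintype.sum_prod_type, Finset.sum_div]
    simp only [Finset.sum_div, div_pow]
    norm_num
  rw [normF_sq, normF_sq, normF_sq, innerF]
  linarith [sum_sum_mul_sub_mul_sq u v]

lemma normF_halfWedge_le (u v : Fin r → ℝ) :
    normF (halfWedge u v) ≤ sin (angleF u v) * (normF u * normF v) := by
  have hsin : 0 ≤ sin (angleF u v) := by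
    rw [angleF_eq_angle]; exact sin_angle_nonneg _ _
  refine le_of_pow_le_pow_left₀ two_ne_zero
    (mul_nonneg hsin (mul_nonneg (normF_nonneg u) (normF_nonneg v))) ?_
  nlinarith [normF_halfWedge_sq_le u v, sin_angleF_mul_normF_mul_normF_sq u v,
    sq_nonneg (sin (angleF u v) * (normF u * normF v))]

lemma inv_mul_fst (p q : G r) : (mul (inv p) q).1 = q.1 - p.1 := by
  ext i; simp only [mul, inv, Pi.sub_apply]; ring

lemma inv_mul_snd (p q : G r) : (mul (inv p) q).2 = q.2 - p.2 - halfWedge p.1 q.1 := by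
  ext ij; simp only [mul, inv, halfWedge, Pi.sub_apply]; ring

lemma inv_mul_swap (p q : G r) : mul (inv q) p = inv (mul (inv p) q) := by
  ext <;> simp only [mul, inv] <;> ring

lemma dil_inv (l : ℝ) (x : G r) : dil l (inv x) = inv (dil l x) := by
  ext <;> simp only [dil, inv] <;> ring

lemma normSq_inv (x : G r) : normSq (inv x) = normSq x := by
  simp [normSq, inv]

lemma dist_comm (R : ℝ) (p q : G r) : dist R p q = dist R q p := by
  simp only [dist, inv_mul_swap q p, dil_inv, normSq_inv]

lemma normSq_dil (l : ℝ) (x : G r) :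
    normSq (dil l x) = l ^ 2 * normF x.1 ^ 2 + l ^ 4 * normF x.2 ^ 2 := by
  simp only [normSq, dil, normF_sq, Finset.mul_sum]
  congr 1 <;> exact Finset.sum_congr rfl fun _ _ => by ring

lemma normSq_dil_one_div_le_iff (R : ℝ) {l : ℝ} (hl : 0 < l) (x : G r) :
    normSq (dil (1 / l) x) ≤ R ^ 2 ↔ normF x.1 ^ 2 * l ^ 2 + normF x.2 ^ 2 ≤ R ^ 2 * l ^ 4 := by
  have h : (1 / l) ^ 2 * normF x.1 ^ 2 + (1 / l) ^ 4 * normF x.2 ^ 2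
      = (normF x.1 ^ 2 * l ^ 2 + normF x.2 ^ 2) / l ^ 4 := by
    field_simp
  rw [normSq_dil, h, div_le_iff₀ (by positivity)]

lemma dist_le_of_le (R : ℝ) {l : ℝ} (hl : 0 < l) {p q : G r}
    (h : normF (q.1 - p.1) ^ 2 * l ^ 2 + normF (q.2 - p.2 - halfWedge p.1 q.1) ^ 2
      ≤ R ^ 2 * l ^ 4) :
    dist R p q ≤ l := by
  refine csInf_le ⟨0, fun _ hx => hx.1.le⟩ ⟨hl, ?_⟩
  rwa [normSq_dil_one_div_le_iff R hl, inv_mul_fst, inv_mul_snd]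

lemma inv_zero_mul (p : G r) : mul (inv 0) p = p := by
  ext <;> simp [mul, inv]

lemma dist_zero_eq {R : ℝ} (hR : 0 < R) {p : G r} (hp : p.1 ≠ 0) :
    dist R 0 p = quarticRoot R (normF p.1) (normF p.2) := by
  have hroot := quarticRoot_pos (W := normF p.2) hR (normF_pos hp)
  have hset : {l : ℝ | 0 < l ∧ normSq (dil (1 / l) (mul (inv 0) p)) ≤ R ^ 2}
      = Set.Ici (quarticRoot R (normF p.1) (normF p.2)) := by
    refine Set.ext fun l => ⟨fun ⟨hl, h⟩ => ?_, fun h => ?_⟩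
    · rw [inv_zero_mul, normSq_dil_one_div_le_iff R hl] at h
      exact (sq_mul_sq_add_sq_le_iff hR hl).1 h
    · have hl := hroot.trans_le h
      refine ⟨hl, ?_⟩
      rw [inv_zero_mul, normSq_dil_one_div_le_iff R hl]
      exact (sq_mul_sq_add_sq_le_iff hR hl).2 h
  rw [dist, hset, csInf_Ici]

theorem dist_le_dist_zero_of_angleF_lt {R δ : ℝ} (hR : 0 < R) (hδ : δ ≤ 1 / 100)
    (hRδ : R * δ ≤ 1 / 100) {p q : G r} (hp : p.1 ≠ 0) (hq : q.1 ≠ 0)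
    (hpb : R * normF p.2 ≤ 0.9 * normF p.1 ^ 2) (hqb : R * normF q.2 ≤ 0.9 * normF q.1 ^ 2)
    (hv : angleF p.1 q.1 < δ) (hw : angleF p.2 q.2 < δ) (hle : dist R 0 q ≤ dist R 0 p) :
    dist R p q ≤ dist R 0 p := by
  have hδ0 : 0 ≤ δ := (angleF_nonneg _ _).trans hv.le
  set a := normF p.1
  set b := normF p.2
  set c := normF q.1
  set e := normF q.2
  set N := normF (halfWedge p.1 q.1)
  set l := dist R 0 p with hl_def
  rw [dist_zero_eq hR hp] at hl_def
  have hl : 0 < l := hl_def ▸ quarticRoot_pos hR (normF_pos hp)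
  have hpl : R ^ 2 * l ^ 4 = a ^ 2 * l ^ 2 + b ^ 2 := hl_def ▸ quarticRoot_spec hR
  have hql : c ^ 2 * l ^ 2 + e ^ 2 ≤ R ^ 2 * l ^ 4 :=
    (sq_mul_sq_add_sq_le_iff hR hl).2 (dist_zero_eq hR hq ▸ hle)
  have hN : N ≤ a * c * δ :=
    calc N ≤ sin (angleF p.1 q.1) * (a * c) := normF_halfWedge_le _ _
      _ ≤ δ * (a * c) := mul_le_mul_of_nonneg_right
          ((sin_le (angleF_nonneg _ _)).trans hv.le)
          (mul_nonneg (normF_nonneg _) (normF_nonneg _))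
      _ = a * c * δ := mul_comm _ _
  have hdv := normF_sub_sq_le_of_angleF_lt hv
  have hdw := normF_sub_sq_le_of_angleF_le_pi_div_two (hw.le.trans (by linarith [pi_gt_three]))
  have hwedge := pow_le_pow_left₀ (normF_nonneg _) (normF_sub_le (q.2 - p.2) (halfWedge p.1 q.1)) 2
  have hdwN := mul_le_mul_of_nonneg_right (normF_sub_le q.2 p.2) (normF_nonneg (halfWedge p.1 q.1))
  have hmargin := quartic_margin_of_parabolic hR hl (normF_nonneg _) (normF_nonneg _)
    (normF_nonneg _) (normF_nonneg _) hpl hpb hql hqb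
  have herror := quartic_error_le hR hl (normF_nonneg _) (le_mul_of_quartic_le hR hl hpl.ge)
    (le_mul_of_quartic_le hR hl hql) (le_mul_sq_of_quartic_le hR hpl.ge)
    (le_mul_sq_of_quartic_le hR hql) (normF_nonneg _) hN hδ0 hδ hRδ
  apply dist_le_of_le R hl
  nlinarith [mul_le_mul_of_nonneg_right hdv (sq_nonneg l)]

end Fr2

theorem statement14_general (r : ℕ) (R : ℝ) (hR : 0 < R) :
    ∃ δ : ℝ, 0 < δ ∧ ∀ p q : Fr2.G r,
      p.1 ≠ 0 → q.1 ≠ 0 → p.2 ≠ 0 → q.2 ≠ 0 →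
      (R * normF p.2 ≤ (0.9 : ℝ) * (normF p.1) ^ 2) →
      (R * normF q.2 ≤ (0.9 : ℝ) * (normF q.1) ^ 2) →
      angleF p.1 q.1 < δ → angleF p.2 q.2 < δ →
      Fr2.dist R p q ≤ Fr2.dist R 0 p ∨ Fr2.dist R p q ≤ Fr2.dist R 0 q := by
  refine ⟨min (1 / 100) (1 / (100 * R)), lt_min (by norm_num) (by positivity), ?_⟩
  intro p q hp hq _ _ hpb hqb hv hw
  have hδ : min (1 / 100) (1 / (100 * R)) ≤ 1 / 100 := min_le_left _ _
  have hRδ : R * min (1 / 100) (1 / (100 * R)) ≤ 1 / 100 := by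
    calc R * min (1 / 100) (1 / (100 * R)) ≤ R * (1 / (100 * R)) :=
          mul_le_mul_of_nonneg_left (min_le_right _ _) hR.le
      _ = 1 / 100 := by field_simp
  rcases le_total (Fr2.dist R 0 q) (Fr2.dist R 0 p) with hle | hle
  · exact .inl (Fr2.dist_le_dist_zero_of_angleF_lt hR hδ hRδ hp hq hpb hqb hv hw hle)
  · rw [angleF_comm] at hv hw
    exact .inr (Fr2.dist_comm R p q ▸
      Fr2.dist_le_dist_zero_of_angleF_lt hR hδ hRδ hq hp hqb hpb hv hw hle)

/-- Lemma for points outside the parabolic region `𝓟_a`, `a = 0.9`: if the angles are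
small then one of the two points lies in the ball centered at the other with radius the
distance of that other point to the identity. -/
theorem statement14 (r : ℕ) (hr : 2 ≤ r) (R : ℝ) (hR : 0 < R) :
    ∃ δ : ℝ, 0 < δ ∧ ∀ p q : Fr2.G r,
      p.1 ≠ 0 → q.1 ≠ 0 → p.2 ≠ 0 → q.2 ≠ 0 →
      (R * normF p.2 ≤ (0.9 : ℝ) * (normF p.1) ^ 2) →
      (R * normF q.2 ≤ (0.9 : ℝ) * (normF q.1) ^ 2) →
      angleF p.1 q.1 < δ → angleF p.2 q.2 < δ →
      Fr2.dist R p q ≤ Fr2.dist R 0 p ∨ Fr2.dist R p q ≤ Fr2.dist R 0 q :=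
  statement14_general r R hR
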